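/- If h ∈ C^k(𝕋) for some k ∈ ℕ, then the Toeplitz operator T_h is of class C^k with respect to the position operator X on ℓ²(ℕ), and for all 0 ≤ j ≤ k the iterated commutator satisfies ad_X^j T_h = (−i)^j T_{h^{(j)}}, where h^{(j)} is the j-th derivative of h. -/

import Mathlib

/-!
In the basis `e` the position operator is diagonal, `X e_q = (q + 1) e_q`, and formally
self-adjoint; expanding both sides of the commutator form in `e` (Parseval) shows that a bounded
`C` represents `ad_X B` as soon as `C_{nq} = (n - q) B_{nq}`. For the Toeplitz matrices
`B_{nq} = (-i)^j (h^{(j)})^(n - q)` this is the identity `(h^{(j+1)})^(m) = i m (h^{(j)})^(m)`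
for Fourier coefficients, obtained by integrating by parts, the boundary term vanishing by
`2π`-periodicity.
-/

open scoped InnerProductSpace
open Complex

noncomputable section

/-- The `n`-th Fourier coefficient of a `2π`-periodic function `f : ℝ → ℂ`. -/
def fcoef (f : ℝ → ℂ) (n : ℤ) : ℂ :=
  (1 / (2 * Real.pi)) • ∫ θ in (0:ℝ)..(2 * Real.pi), Complex.exp (-Complex.I * n * θ) * f θ

variable {E : Type*} [NormedAddCommGroup E] [InnerProductSpace ℂ E] [CompleteSpace E]

/-- `e` is the canonical orthonormal (Hilbert) basis of `ℓ²(ℕ)`, abstractly: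
an orthonormal family with dense span. -/
def IsONBasis (e : ℕ → E) : Prop :=
  Orthonormal ℂ e ∧ (Submodule.span ℂ (Set.range e)).topologicalClosure = ⊤

/-- `T` is the Toeplitz operator with symbol `f`: `⟪e n, T (e k)⟫ = f̂(n−k)`. -/
def IsToeplitz (e : ℕ → E) (f : ℝ → ℂ) (T : E →L[ℂ] E) : Prop :=
  ∀ n k : ℕ, ⟪e n, T (e k)⟫_ℂ = fcoef f ((n : ℤ) - k)

/-- `T` is the Hankel operator with symbol `f`: `⟪e n, T (e k)⟫ = f̂(n+k+1)`
(0-based indexing of the paper's `f̂_{n+k-1}`, `n, k ≥ 1`). -/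
def IsHankel (e : ℕ → E) (f : ℝ → ℂ) (T : E →L[ℂ] E) : Prop :=
  ∀ n k : ℕ, ⟪e n, T (e k)⟫_ℂ = fcoef f ((n : ℤ) + k + 1)

/-- `X` is the (self-adjoint) position operator: `X e_n = (n+1) e_n` (0-based). -/
def IsPosOp (e : ℕ → E) (X : E →ₗ.[ℂ] E) : Prop :=
  X.adjoint = X ∧ ∀ q : ℕ, ∃ hq : e q ∈ X.domain, X ⟨e q, hq⟩ = ((q : ℂ) + 1) • e q

/-- `A` is the self-adjoint operator `A_g`, the closure of `½(T_g X + X T_g)`;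
being essentially self-adjoint, it is the unique self-adjoint operator with
matrix elements `((p+q+2)/2)·ĝ(p−q)` on the canonical basis (0-based). -/
def IsAg (e : ℕ → E) (g : ℝ → ℂ) (A : E →ₗ.[ℂ] E) : Prop :=
  A.adjoint = A ∧ ∀ q : ℕ, ∃ hq : e q ∈ A.domain, ∀ p : ℕ,
    ⟪e p, A ⟨e q, hq⟩⟫_ℂ = (((p : ℂ) + q + 2) / 2) * fcoef g ((p : ℤ) - q)

/-- `C = ad_A B`: the commutator form of `A` and `B` on `D(A) × D(A)` is
represented by the bounded operator `C`; in particular `B ∈ C¹(A)`. -/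
def CommutatorOf (A : E →ₗ.[ℂ] E) (B C : E →L[ℂ] E) : Prop :=
  ∀ φ ψ : A.domain, ⟪A φ, B (ψ : E)⟫_ℂ - ⟪(φ : E), B (A ψ)⟫_ℂ = ⟪(φ : E), C (ψ : E)⟫_ℂ

theorem Function.Periodic.deriv {f : ℝ → ℝ} {c : ℝ} (hf : Function.Periodic f c) :
    Function.Periodic (deriv f) c := fun x => by
  rw [← deriv_comp_add_const, funext hf]

theorem Function.Periodic.iteratedDeriv {f : ℝ → ℝ} {c : ℝ} (hf : Function.Periodic f c)
    (n : ℕ) : Function.Periodic (iteratedDeriv n f) c := by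
  induction n with
  | zero => simpa using hf
  | succ n ih => simpa only [iteratedDeriv_succ] using ih.deriv

open Real in
theorem fcoef_deriv {g g' : ℝ → ℂ} (hg : ∀ x, HasDerivAt g (g' x) x) (hg' : Continuous g')
    (hper : g (2 * π) = g 0) (m : ℤ) : fcoef g' m = I * m * fcoef g m := by
  have hu (x : ℝ) : HasDerivAt (fun θ : ℝ => exp (-I * m * θ)) (-I * m * exp (-I * m * x)) x := by
    simpa [mul_comm] using ((hasDerivAt_id (x : ℂ)).const_mul (-I * m)).cexp.comp_ofReal
  have hu_period : exp (-I * m * (2 * π : ℝ)) = 1 := by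
    rw [← exp_int_mul_two_pi_mul_I (-m)]
    congr 1
    push_cast
    ring
  have parts : ∫ θ in (0)..(2 * π), exp (-I * m * θ) * g' θ
      = I * m * ∫ θ in (0)..(2 * π), exp (-I * m * θ) * g θ := by
    rw [intervalIntegral.integral_mul_deriv_eq_deriv_mul (fun x _ => hu x) (fun x _ => hg x)
      ((by fun_prop : Continuous fun x : ℝ => -I * m * exp (-I * m * x)).intervalIntegrable _ _)
      (hg'.intervalIntegrable _ _), hu_period, hper]
    simp only [ofReal_zero, mul_zero, Complex.exp_zero, mul_assoc,
      intervalIntegral.integral_const_mul]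
    ring
  simp only [fcoef, real_smul, parts]
  ring

open Real in
theorem fcoef_iteratedDeriv_succ {h : ℝ → ℝ} {k j : ℕ} (hsm : ContDiff ℝ k h)
    (hper : Function.Periodic h (2 * π)) (hj : j < k) (m : ℤ) :
    fcoef (fun x => ((iteratedDeriv (j + 1) h x : ℝ) : ℂ)) m
      = I * m * fcoef (fun x => ((iteratedDeriv j h x : ℝ) : ℂ)) m := by
  have hjk : (j : WithTop ℕ∞) < k := by exact_mod_cast hj
  have hjk' : ((j + 1 : ℕ) : WithTop ℕ∞) ≤ k := by exact_mod_cast hj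
  refine fcoef_deriv (fun x => ?_) ?_ ?_ m
  · rw [iteratedDeriv_succ]
    exact ((hsm.differentiable_iteratedDeriv j hjk) x).hasDerivAt.ofReal_comp
  · exact continuous_ofReal.comp (hsm.continuous_iteratedDeriv _ hjk')
  · simpa using congrArg ofReal (hper.iteratedDeriv j 0)

section InnerProductSpace

variable {F : Type*} [NormedAddCommGroup F] [InnerProductSpace ℂ F]

theorem IsONBasis.dense_of_forall_mem {e : ℕ → F} (he : IsONBasis e) {S : Submodule ℂ F}
    (hS : ∀ q, e q ∈ S) : Dense (S : Set F) := by
  rw [Submodule.dense_iff_topologicalClosure_eq_top, eq_top_iff, ← he.2]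
  exact Submodule.topologicalClosure_mono (Submodule.span_le.mpr (Set.range_subset_iff.mpr hS))

namespace LinearPMap.IsFormalAdjoint

variable {X : F →ₗ.[ℂ] F} (hX : X.IsFormalAdjoint X) {v : X.domain} {c : ℝ}
  (hv : X v = (c : ℂ) • (v : F))
include hX hv

theorem inner_apply_left_of_apply_eq_smul (φ : X.domain) :
    ⟪X φ, v⟫_ℂ = c * ⟪(φ : F), v⟫_ℂ := by
  rw [hX φ v, hv, inner_smul_right]

theorem inner_apply_right_of_apply_eq_smul (ψ : X.domain) :
    ⟪(v : F), X ψ⟫_ℂ = c * ⟪(v : F), ψ⟫_ℂ := by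
  rw [← hX v ψ, hv, inner_smul_left, conj_ofReal]

end LinearPMap.IsFormalAdjoint

end InnerProductSpace

theorem IsPosOp.isFormalAdjoint {e : ℕ → E} {X : E →ₗ.[ℂ] E} (hX : IsPosOp e X)
    (he : IsONBasis e) : X.IsFormalAdjoint X := by
  have := LinearPMap.adjoint_isFormalAdjoint (he.dense_of_forall_mem fun q => (hX.2 q).1)
  rwa [hX.1] at this

theorem HilbertBasis.hasSum_inner_apply_mul_inner {ι : Type*} (b : HilbertBasis ι ℂ E)
    (T : E →L[ℂ] E) (x y : E) :
    HasSum (fun i => ⟪x, T (b i)⟫_ℂ * ⟪b i, y⟫_ℂ) ⟪x, T y⟫_ℂ := by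
  simpa [ContinuousLinearMap.adjoint_inner_left] using
    b.hasSum_inner_mul_inner (ContinuousLinearMap.adjoint T x) y

section Diagonal

variable {ι : Type*} (b : HilbertBasis ι ℂ E) {X : E →ₗ.[ℂ] E} (hX : X.IsFormalAdjoint X)
  {μ : ι → ℝ} (hXb : ∀ i, ∃ hi : b i ∈ X.domain, X ⟨b i, hi⟩ = (μ i : ℂ) • b i)
  {B C : E →L[ℂ] E} (hBC : ∀ i j, ⟪b i, C (b j)⟫_ℂ = (μ i - μ j) * ⟪b i, B (b j)⟫_ℂ)
include hX hXb hBC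

theorem inner_basis_commutator (i : ι) (ψ : X.domain) :
    μ i * ⟪b i, B ψ⟫_ℂ - ⟪b i, B (X ψ)⟫_ℂ = ⟪b i, C ψ⟫_ℂ := by
  have hterm (j : ι) : μ i * (⟪b i, B (b j)⟫_ℂ * ⟪b j, ψ⟫_ℂ) - ⟪b i, B (b j)⟫_ℂ * ⟪b j, X ψ⟫_ℂ
      = ⟪b i, C (b j)⟫_ℂ * ⟪b j, ψ⟫_ℂ := by
    obtain ⟨hj, hXj⟩ := hXb j
    rw [hX.inner_apply_right_of_apply_eq_smul (v := ⟨b j, hj⟩) hXj, hBC]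
    ring
  have hsum := (b.hasSum_inner_apply_mul_inner B (b i) ψ |>.mul_left (μ i : ℂ)).sub
    (b.hasSum_inner_apply_mul_inner B (b i) (X ψ))
  simp only [hterm] at hsum
  exact hsum.unique (b.hasSum_inner_apply_mul_inner C (b i) ψ)

theorem commutatorOf_of_diagonal : CommutatorOf X B C := by
  intro φ ψ
  have hterm (i : ι) : ⟪X φ, b i⟫_ℂ * ⟪b i, B ψ⟫_ℂ - ⟪(φ : E), b i⟫_ℂ * ⟪b i, B (X ψ)⟫_ℂ
      = ⟪(φ : E), b i⟫_ℂ * ⟪b i, C ψ⟫_ℂ := by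
    obtain ⟨hi, hXi⟩ := hXb i
    rw [hX.inner_apply_left_of_apply_eq_smul (v := ⟨b i, hi⟩) hXi,
      ← inner_basis_commutator b hX hXb hBC]
    ring
  have hsum := (b.hasSum_inner_mul_inner (X φ) (B ψ)).sub (b.hasSum_inner_mul_inner φ (B (X ψ)))
  simp only [hterm] at hsum
  exact hsum.unique (b.hasSum_inner_mul_inner φ (C ψ))

end Diagonal

theorem stmt_2 (e : ℕ → E) (he : IsONBasis e)
    (k : ℕ) (h : ℝ → ℝ) (hsm : ContDiff ℝ k h) (hper : Function.Periodic h (2 * Real.pi))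
    (X : E →ₗ.[ℂ] E) (hX : IsPosOp e X)
    (Th : ℕ → E →L[ℂ] E)
    (hTh : ∀ j ≤ k, IsToeplitz e (fun x => Complex.ofReal (iteratedDeriv j h x)) (Th j)) :
    ∀ j < k, CommutatorOf X ((-Complex.I) ^ j • Th j) ((-Complex.I) ^ (j + 1) • Th (j + 1)) := by
  intro j hj
  refine commutatorOf_of_diagonal (HilbertBasis.mk he.1 he.2.ge) (hX.isFormalAdjoint he)
    (μ := fun q => q + 1) (fun q => ?_) (fun n q => ?_)
  · simpa using hX.2 q
  · simp only [HilbertBasis.coe_mk, smul_apply, inner_smul_right]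
    rw [hTh j hj.le, hTh (j + 1) hj, fcoef_iteratedDeriv_succ hsm hper hj, pow_succ]
    push_cast
    linear_combination
      -(-I) ^ j * fcoef (fun x => ((iteratedDeriv j h x : ℝ) : ℂ)) (n - q) * (n - q) * I_mul_I
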